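/- arXiv:1901.08460 — 4 statements merged into one kernel-verified Lean document; each statement's English description precedes it below -/
import Mathlib

section
/- Consider the sequence recursion underlying the convergence of the decentralized Frank-Wolfe algorithm (Theorem 1). Let K ≥ 1 be an integer and C ≥ 0 a real constant. Let p : ℕ → ℝ satisfy p(0) ≥ 0 and, for all t ≥ 0, p(t+1) ≤ (1 − γ_t/K)·p(t) + γ_t²·C/(2K), where γ_t = 2K/(t + 2K). Then for every ε > 0 and every integer t ≥ 6K(C + p(0))/ε, one has p(t) ≤ ε. (In the paper, p(t) is the expected sub-optimality gap E[f(α^(t)) − f(α*)] of the decentralized Frank-Wolfe iterates and C = C⊗_f is the global product curvature constant, so the algorithm takes at most 6K(C⊗_f + p(0))/ε iterations to reach expected sub-optimality ε.) -/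
/-!
With `s = n + a`, the recursion reads `p (n+1) ≤ (1 - 2/s) p n + D/s²`. If `p n ≤ B/s` with
`D ≤ B`, the right-hand side is at most `(s - 1) B / s² ≤ B/(s+1)` because `(s-1)(s+1) ≤ s²`;
so `p n ≤ B/(n + a)` by induction. For the Frank-Wolfe step `γ_t = 2K/(t+2K)` one takes
`a = 2K`, `D = 2KC` and `B = 2K(C + p 0)`, and `t ≥ 6K(C + p 0)/ε` makes `B/(t+2K) ≤ ε`.
-/

theorem recursion_step_le_div_succ {s x B D : ℝ} (hs : 2 ≤ s) (hB : 0 ≤ B) (hD : D ≤ B)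
    (hx : x ≤ B / s) :
    (1 - 2 / s) * x + D / s ^ 2 ≤ B / (s + 1) := by
  have hs0 : 0 < s := by linarith
  have hcoef : 0 ≤ 1 - 2 / s := by rw [sub_nonneg, div_le_one hs0]; exact hs
  calc (1 - 2 / s) * x + D / s ^ 2
      ≤ (1 - 2 / s) * (B / s) + B / s ^ 2 := by gcongr
    _ = (s - 1) * (s + 1) * B / (s ^ 2 * (s + 1)) := by field_simp; ring
    _ ≤ s ^ 2 * B / (s ^ 2 * (s + 1)) := by gcongr; nlinarith
    _ = B / (s + 1) := by field_simp

theorem le_div_add_of_recursion {p : ℕ → ℝ} {a B D : ℝ} (ha : 2 ≤ a) (hB : 0 ≤ B)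
    (hD : D ≤ B) (h0 : p 0 ≤ B / a)
    (hrec : ∀ n : ℕ, p (n + 1) ≤ (1 - 2 / (n + a)) * p n + D / (n + a) ^ 2) (n : ℕ) :
    p n ≤ B / (n + a) := by
  induction n with
  | zero => simpa using h0
  | succ m ih =>
    have hs : 2 ≤ (m : ℝ) + a := by linarith [(Nat.cast_nonneg m : (0 : ℝ) ≤ m)]
    calc p (m + 1) ≤ (1 - 2 / (m + a)) * p m + D / (m + a) ^ 2 := hrec m
      _ ≤ B / ((m + a) + 1) := recursion_step_le_div_succ hs hB hD ih
      _ = B / (((m + 1 : ℕ) : ℝ) + a) := by push_cast; ring_nf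

theorem frankWolfe_recursion_rhs_eq {K : ℝ} (hK : 0 < K) {t x C : ℝ} (ht : 0 ≤ t) :
    (1 - 2 * K / (t + 2 * K) / K) * x + (2 * K / (t + 2 * K)) ^ 2 * C / (2 * K)
      = (1 - 2 / (t + 2 * K)) * x + 2 * K * C / (t + 2 * K) ^ 2 := by
  have : t + 2 * K ≠ 0 := by positivity
  field_simp

/-- Convergence of the decentralized Frank-Wolfe recursion (Theorem 1).
If `p` satisfies `p (t+1) ≤ (1 - γ_t/K) p t + γ_t² C / (2K)` with `γ_t = 2K/(t+2K)`,
then `p t ≤ ε` for every `t ≥ 6K(C + p 0)/ε`. -/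
theorem decentralized_frank_wolfe_iterations
    (K : ℕ) (hK : 1 ≤ K) (C : ℝ) (hC : 0 ≤ C)
    (p : ℕ → ℝ) (hp0 : 0 ≤ p 0)
    (γ : ℕ → ℝ) (hγ : ∀ t : ℕ, γ t = 2 * K / ((t : ℝ) + 2 * K))
    (hrec : ∀ t : ℕ, p (t + 1) ≤ (1 - γ t / K) * p t + (γ t) ^ 2 * C / (2 * K))
    (ε : ℝ) (hε : 0 < ε)
    (t : ℕ) (ht : 6 * K * (C + p 0) / ε ≤ (t : ℝ)) :
    p t ≤ ε := by
  have hK1 : (1 : ℝ) ≤ K := by exact_mod_cast hK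
  have hbound : p t ≤ 2 * K * (C + p 0) / (t + 2 * K) := by
    refine le_div_add_of_recursion (D := 2 * K * C) (by linarith) (by positivity)
      (by nlinarith) ?_ ?_ t
    · rw [le_div_iff₀ (by positivity)]; nlinarith
    · intro n
      rw [← frankWolfe_recursion_rhs_eq (by positivity) (Nat.cast_nonneg n), ← hγ n]
      exact hrec n
  rw [div_le_iff₀ hε] at ht
  refine hbound.trans ((div_le_iff₀ (by positivity)).2 ?_)
  nlinarith
end

section
/- (Theorem 2, stated as a finite average over i.i.d. uniform block choices.) For any w⁰ ∈ ℝ^{K(K−1)/2} with w⁰ ≥ 0 and any integer T ≥ 1, averaging over all sequences (b_1,…,b_T) ∈ B^T of blocks and setting w^t = T_{b_t}(w^{t−1}) for t = 1,…,T, one has (1/|B|^T) · Σ_{(b_1,…,b_T) ∈ B^T} h(w^T) − h(w*) ≤ ρ^T · (h(w⁰) − h(w*)), where ρ = 1 − 2κσ/(K(K−1)·L_max). Equivalently, under i.i.d. uniform random block selection, the expected sub-optimality gap E[h(w^(T)) − h*] is cut by the factor ρ at every iteration. -/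
open scoped RealInnerProductSpace BigOperators

/-- Coordinates are indexed by unordered pairs of distinct elements of `[K]`,
represented as ordered pairs `(i,j)` with `i < j`; there are `K(K−1)/2` of them. -/
abbrev PairIdx (K : ℕ) := {q : Fin K × Fin K // q.1 < q.2}

/-- Weight vectors live in `ℝ^{K(K−1)/2}` with the Euclidean structure. -/
abbrev GVec (K : ℕ) := EuclideanSpace ℝ (PairIdx K)

/-- A block `b = (k, 𝒦)` with `k ∈ [K]`, `𝒦 ⊆ [K]\{k}`, `|𝒦| = κ`. -/
abbrev Blk (K κ : ℕ) := {b : Fin K × Finset (Fin K) // b.1 ∉ b.2 ∧ b.2.card = κ}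

/-- The coordinate `{i,j}` belongs to block `(k,𝒦)` iff it is of the form `{k,l}`, `l ∈ 𝒦`. -/
def inBlock {K κ : ℕ} (b : Blk K κ) (q : PairIdx K) : Prop :=
  (q.1.1 = b.1.1 ∧ q.1.2 ∈ b.1.2) ∨ (q.1.2 = b.1.1 ∧ q.1.1 ∈ b.1.2)

instance {K κ : ℕ} (b : Blk K κ) (q : PairIdx K) : Decidable (inBlock b q) := by
  unfold inBlock; infer_instance

/-- The block proximal-gradient update `T_b(w)`: on the coordinates of block `b` it equals
`max(0, [w]_b − (1/L_b)[∇h(w)]_b)`, and it agrees with `w` outside block `b`. -/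
noncomputable def blockProxUpdate {K κ : ℕ} (h : GVec K → ℝ) (L : Blk K κ → ℝ)
    (b : Blk K κ) (w : GVec K) : GVec K :=
  WithLp.toLp 2 (fun q => if inBlock b q then max 0 (w q - (1 / L b) * gradient h w q) else w q)

/-- `iterSeq h L bs w⁰` is the iterate `w^T` obtained from `w⁰` by applying the block
updates `T_{b_1}, …, T_{b_T}` in order. -/
noncomputable def iterSeq {K κ T : ℕ} (h : GVec K → ℝ) (L : Blk K κ → ℝ)
    (bs : Fin T → Blk K κ) (w0 : GVec K) : GVec K :=
  (List.ofFn bs).foldl (fun w b => blockProxUpdate h L b w) w0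

/-!
A block update `T_b w` minimizes, over nonnegative values on block `b`, the quadratic upper model
of `h` given by block smoothness, so it does at least as well as moving block `b` to the feasible
point `v = w + (σ / L_max) (w* - w)`. Each coordinate lies in `2 C(K-2, κ-1)` of the `K C(K-1, κ)`
blocks, a fraction `2κ / (K (K-1))`; averaging over `b` therefore recovers that fraction of the
full model decrease at `v`, which strong convexity bounds by `(σ / L_max) (h w* - h w)`. This is
a contraction of the mean gap by `ρ`, and it iterates because the sum over block sequences splits
over the first block.
-/

open Finset

theorem prox_le_quadratic_model {a g w u : ℝ} (ha : 0 < a) (hu : 0 ≤ u) :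
    g * (max 0 (w - 1 / a * g) - w) + a / 2 * (max 0 (w - 1 / a * g) - w) ^ 2
      ≤ g * (u - w) + a / 2 * (u - w) ^ 2 := by
  obtain ⟨s, rfl⟩ : ∃ s, g = a * s := ⟨g / a, by field_simp⟩
  have hs : 1 / a * (a * s) = s := by field_simp
  rw [hs]
  rcases le_total 0 (w - s) with hpos | hneg
  · rw [max_eq_right hpos]
    nlinarith [mul_nonneg ha.le (sq_nonneg (u - w + s))]
  · rw [max_eq_left hneg]
    nlinarith [mul_nonneg hu (mul_nonneg ha.le (sub_nonneg.mpr hneg)),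
      mul_nonneg ha.le (mul_nonneg hu hu)]

theorem EuclideanSpace.inner_add_mul_norm_sq_eq_sum {ι : Type*} [Fintype ι]
    (x y : EuclideanSpace ℝ ι) (c : ℝ) :
    ⟪x, y⟫ + c / 2 * ‖x‖ ^ 2 = ∑ i, (y i * x i + c / 2 * x i ^ 2) := by
  simp only [PiLp.inner_apply, RCLike.inner_apply, conj_trivial, EuclideanSpace.norm_sq_eq,
    Real.norm_eq_abs, sq_abs, Finset.mul_sum, Finset.sum_add_distrib]

theorem sum_foldl_ofFn_le_pow {β X : Type*} [Fintype β] (F : β → X → X) (P : X → Prop)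
    (hP : ∀ b x, P x → P (F b x)) (ψ : X → ℝ) {r : ℝ} (hr : 0 ≤ r)
    (hstep : ∀ x, P x → ∑ b, ψ (F b x) ≤ r * ψ x) (n : ℕ) {x : X} (hx : P x) :
    ∑ bs : Fin n → β, ψ ((List.ofFn bs).foldl (fun w b => F b w) x) ≤ r ^ n * ψ x := by
  induction n generalizing x with
  | zero => simp
  | succ n ih =>
    calc ∑ bs : Fin (n + 1) → β, ψ ((List.ofFn bs).foldl (fun w b => F b w) x)
        = ∑ b, ∑ bs : Fin n → β, ψ ((List.ofFn bs).foldl (fun w b => F b w) (F b x)) := by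
          rw [← (Fin.consEquiv fun _ => β).sum_comp, Fintype.sum_prod_type]
          simp [Fin.consEquiv, List.ofFn_succ]
      _ ≤ ∑ b, r ^ n * ψ (F b x) := sum_le_sum fun b _ => ih (hP b x hx)
      _ ≤ r ^ n * (r * ψ x) := by
          rw [← mul_sum]; exact mul_le_mul_of_nonneg_left (hstep x hx) (pow_nonneg hr n)
      _ = r ^ (n + 1) * ψ x := by ring

section Blocks

variable {K κ : ℕ}

theorem card_filter_blk_fst_eq (i : Fin K) (P : Finset (Fin K) → Prop) [DecidablePred P] :
    #{b : Blk K κ | b.1.1 = i ∧ P b.1.2} = #{s ∈ (univ.erase i).powersetCard κ | P s} := by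
  refine card_bij' (fun b _ => b.1.2) (fun s hs => ⟨(i, s), ?_⟩) ?_ ?_ ?_ ?_
  · simp only [mem_filter, mem_powersetCard, subset_erase] at hs
    exact ⟨hs.1.1.2, hs.1.2⟩
  · rintro ⟨⟨k, s⟩, hk, hcard⟩ hb
    simp only [mem_filter, mem_univ, true_and] at hb
    obtain ⟨rfl, hP⟩ := hb
    simp [mem_powersetCard, subset_erase, hk, hcard, hP]
  · intro s hs
    simpa using (mem_filter.mp hs).2
  · rintro ⟨⟨k, s⟩, _⟩ hb
    simp only [mem_filter, mem_univ, true_and] at hb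
    obtain ⟨rfl, -⟩ := hb
    rfl
  · intro s _
    rfl

theorem card_blk : Fintype.card (Blk K κ) = K * (K - 1).choose κ := by
  rw [← card_univ, card_eq_sum_card_fiberwise (f := fun b : Blk K κ => b.1.1)
    (fun _ _ => mem_univ _)]
  have hfiber (i : Fin K) : #{b : Blk K κ | b.1.1 = i} = (K - 1).choose κ := by
    simpa [card_powersetCard] using card_filter_blk_fst_eq (κ := κ) i (fun _ => True)
  simp [hfiber]

theorem card_filter_fst_eq_mem_snd (hκ : 1 ≤ κ) {i j : Fin K} (hij : i ≠ j) :
    #{b : Blk K κ | b.1.1 = i ∧ j ∈ b.1.2} = (K - 2).choose (κ - 1) := by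
  have hj : {j} ⊆ univ.erase i := by simpa using hij.symm
  rw [card_filter_blk_fst_eq i (j ∈ ·)]
  simpa [Nat.sub_sub] using card_filter_powersetCard_subset _ _ κ hj (by simpa using hκ)

theorem card_filter_inBlock (hκ : 1 ≤ κ) (q : PairIdx K) :
    #{b : Blk K κ | inBlock b q} = 2 * (K - 2).choose (κ - 1) := by
  have hne : q.1.1 ≠ q.1.2 := q.2.ne
  have hdisj : Disjoint (α := Finset (Blk K κ)) {b | b.1.1 = q.1.1 ∧ q.1.2 ∈ b.1.2}
      {b | b.1.1 = q.1.2 ∧ q.1.1 ∈ b.1.2} := by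
    rw [disjoint_filter]
    rintro b - ⟨h1, -⟩ ⟨h2, -⟩
    exact hne (h1.symm.trans h2)
  simp only [inBlock, @eq_comm _ q.1.1, @eq_comm _ q.1.2]
  rw [filter_or, card_union_of_disjoint hdisj, card_filter_fst_eq_mem_snd hκ hne,
    card_filter_fst_eq_mem_snd hκ hne.symm, two_mul]

theorem sum_blk_sum_ite_inBlock (hκ : 1 ≤ κ) (f : PairIdx K → ℝ) :
    ∑ b : Blk K κ, ∑ q, (if inBlock b q then f q else 0)
      = 2 * (K - 2).choose (κ - 1) * ∑ q, f q := by
  rw [sum_comm, mul_sum]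
  refine sum_congr rfl fun q _ => ?_
  rw [← sum_filter, sum_const, card_filter_inBlock hκ q, nsmul_eq_mul]
  push_cast
  ring

theorem two_mul_choose_mul_eq (hκ : 1 ≤ κ) (hK : 2 ≤ K) :
    (2 * (K - 2).choose (κ - 1) : ℝ) * (K * (K - 1)) = 2 * κ * Fintype.card (Blk K κ) := by
  have hpascal := Nat.add_one_mul_choose_eq (K - 2) (κ - 1)
  rw [show K - 2 + 1 = K - 1 by omega, Nat.sub_add_cancel hκ] at hpascal
  rw [card_blk, Nat.cast_mul, ← Nat.cast_pred (by omega : 0 < K)]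
  linear_combination (2 * K : ℝ) * (by exact_mod_cast hpascal :
    ((K - 1 : ℕ) : ℝ) * (K - 2).choose (κ - 1) = (K - 1).choose κ * κ)

end Blocks

section Descent

variable {K κ : ℕ} {h : GVec K → ℝ} {L : Blk K κ → ℝ}

theorem blockProxUpdate_apply (b : Blk K κ) (w : GVec K) (q : PairIdx K) :
    blockProxUpdate h L b w q
      = if inBlock b q then max 0 (w q - 1 / L b * gradient h w q) else w q :=
  rfl

theorem blockProxUpdate_nonneg (b : Blk K κ) {w : GVec K} (hw : ∀ q, 0 ≤ w q) (q : PairIdx K) :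
    0 ≤ blockProxUpdate h L b w q := by
  rw [blockProxUpdate_apply]
  split_ifs
  exacts [le_max_left _ _, hw q]

theorem exists_inBlock (hκ : 1 ≤ κ) (b : Blk K κ) : ∃ q, inBlock b q := by
  obtain ⟨l, hl⟩ : b.1.2.Nonempty := card_pos.mp (by rw [b.2.2]; omega)
  have hne : l ≠ b.1.1 := fun h => b.2.1 (h ▸ hl)
  rcases hne.lt_or_gt with hlt | hgt
  · exact ⟨⟨(l, b.1.1), hlt⟩, Or.inr ⟨rfl, hl⟩⟩
  · exact ⟨⟨(b.1.1, l), hgt⟩, Or.inl ⟨rfl, hl⟩⟩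

theorem le_blockLipschitz_of_strongConvex (hκ : 1 ≤ κ) {σ : ℝ}
    (hsc : ∀ w z : GVec K, h w + ⟪z - w, gradient h w⟫ + σ / 2 * ‖z - w‖ ^ 2 ≤ h z)
    (b : Blk K κ) (hsmooth : ∀ w z : GVec K, (∀ q, ¬ inBlock b q → z q = 0) →
      h (w + z) ≤ h w + ⟪z, gradient h w⟫ + L b / 2 * ‖z‖ ^ 2) :
    σ ≤ L b := by
  obtain ⟨q, hq⟩ := exists_inBlock hκ b
  have hsupp : ∀ p, ¬ inBlock b p → EuclideanSpace.single q (1 : ℝ) p = 0 := fun p hp => by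
    rw [PiLp.single_apply, if_neg (by rintro rfl; exact hp hq)]
  have hlower := hsc 0 (EuclideanSpace.single q 1)
  have hupper := hsmooth 0 _ hsupp
  simp only [zero_add, sub_zero, PiLp.norm_single, norm_one] at hlower hupper
  linarith

theorem h_blockProxUpdate_le (b : Blk K κ) (hLb : 0 < L b) {M : ℝ} (hLM : L b ≤ M)
    (hsmooth : ∀ w z : GVec K, (∀ q, ¬ inBlock b q → z q = 0) →
      h (w + z) ≤ h w + ⟪z, gradient h w⟫ + L b / 2 * ‖z‖ ^ 2)
    (w : GVec K) {v : GVec K} (hv : ∀ q, 0 ≤ v q) :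
    h (blockProxUpdate h L b w) ≤ h w + ∑ q, if inBlock b q then
      gradient h w q * (v q - w q) + M / 2 * (v q - w q) ^ 2 else 0 := by
  set d := blockProxUpdate h L b w - w
  have hsupp : ∀ q, ¬ inBlock b q → d q = 0 := fun q hq => by
    simp [d, blockProxUpdate_apply, hq]
  have hdesc := hsmooth w d hsupp
  rw [add_sub_cancel, add_assoc, EuclideanSpace.inner_add_mul_norm_sq_eq_sum] at hdesc
  refine hdesc.trans (add_le_add_right (sum_le_sum fun q _ => ?_) _)
  by_cases hq : inBlock b q
  · have hdq : d q = max 0 (w q - 1 / L b * gradient h w q) - w q := by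
      simp [d, blockProxUpdate_apply, hq]
    rw [if_pos hq, hdq]
    refine (prox_le_quadratic_model hLb (hv q)).trans ?_
    gcongr
  · simp [hsupp q hq, hq]

theorem sum_h_blockProxUpdate_sub_le (hK : 2 ≤ K) (hκ : 1 ≤ κ) {σ : ℝ} (hσ : 0 < σ)
    (hsc : ∀ w z : GVec K, h w + ⟪z - w, gradient h w⟫ + σ / 2 * ‖z - w‖ ^ 2 ≤ h z)
    (hLpos : ∀ b, 0 < L b)
    (hsmooth : ∀ (b : Blk K κ) (w z : GVec K), (∀ q, ¬ inBlock b q → z q = 0) →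
      h (w + z) ≤ h w + ⟪z, gradient h w⟫ + L b / 2 * ‖z‖ ^ 2)
    {Lmax : ℝ} (hLmax : ∀ b, L b ≤ Lmax) (hσL : σ ≤ Lmax)
    {wstar w : GVec K} (hwstar : ∀ q, 0 ≤ wstar q) (hw : ∀ q, 0 ≤ w q) :
    ∑ b, (h (blockProxUpdate h L b w) - h wstar)
      ≤ Fintype.card (Blk K κ) * (1 - 2 * κ * σ / (K * ((K : ℝ) - 1) * Lmax))
          * (h w - h wstar) := by
  have hLmax_pos : 0 < Lmax := hσ.trans_le hσL
  set g := gradient h w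
  set β := σ / Lmax
  have hβ0 : 0 ≤ β := by positivity
  have hβ1 : β ≤ 1 := div_le_one_of_le₀ hσL hLmax_pos.le
  have hβL : β * Lmax = σ := div_mul_cancel₀ σ hLmax_pos.ne'
  set v := w + β • (wstar - w)
  have hv : ∀ q, 0 ≤ v q := fun q => by
    simp only [v, PiLp.add_apply, PiLp.smul_apply, PiLp.sub_apply, smul_eq_mul]
    nlinarith [hw q, hwstar q]
  have hmodel : ∑ q, (g q * (v q - w q) + Lmax / 2 * (v q - w q) ^ 2) ≤ β * (h wstar - h w) :=
    calc ∑ q, (g q * (v q - w q) + Lmax / 2 * (v q - w q) ^ 2)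
        = ⟪v - w, g⟫ + Lmax / 2 * ‖v - w‖ ^ 2 := by
          simp [EuclideanSpace.inner_add_mul_norm_sq_eq_sum]
      _ = β * (⟪wstar - w, g⟫ + σ / 2 * ‖wstar - w‖ ^ 2) := by
          rw [show v - w = β • (wstar - w) from add_sub_cancel_left _ _, real_inner_smul_left,
            norm_smul, mul_pow, Real.norm_of_nonneg hβ0]
          linear_combination (β / 2 * ‖wstar - w‖ ^ 2) * hβL
      _ ≤ β * (h wstar - h w) := by
          gcongr
          linarith [hsc w wstar]
  have hrate : 2 * (K - 2).choose (κ - 1) * β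
      = Fintype.card (Blk K κ) * (2 * κ * σ / (K * ((K : ℝ) - 1) * Lmax)) := by
    have hK1 : (1 : ℝ) < K := by exact_mod_cast hK
    have : (K : ℝ) - 1 ≠ 0 := by linarith
    have : (K : ℝ) ≠ 0 := by linarith
    simp only [β]
    field_simp
    linear_combination two_mul_choose_mul_eq hκ hK / 2
  calc ∑ b, (h (blockProxUpdate h L b w) - h wstar)
      ≤ ∑ b : Blk K κ, (h w - h wstar + ∑ q, if inBlock b q then
          g q * (v q - w q) + Lmax / 2 * (v q - w q) ^ 2 else 0) := by
        refine sum_le_sum fun b _ => ?_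
        linarith [h_blockProxUpdate_le b (hLpos b) (hLmax b) (hsmooth b) w hv]
    _ = Fintype.card (Blk K κ) * (h w - h wstar) + 2 * (K - 2).choose (κ - 1)
          * ∑ q, (g q * (v q - w q) + Lmax / 2 * (v q - w q) ^ 2) := by
        rw [sum_add_distrib, sum_const, card_univ, nsmul_eq_mul, sum_blk_sum_ite_inBlock hκ]
    _ ≤ Fintype.card (Blk K κ) * (h w - h wstar)
          + 2 * (K - 2).choose (κ - 1) * (β * (h wstar - h w)) := by
        gcongr
    _ = Fintype.card (Blk K κ) * (1 - 2 * κ * σ / (K * ((K : ℝ) - 1) * Lmax))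
          * (h w - h wstar) := by
        linear_combination (h wstar - h w) * hrate

end Descent

theorem rate_nonneg {K κ : ℕ} (hK : 2 ≤ K) (hκ : κ ≤ K - 1) {σ Lmax : ℝ} (hσ : 0 ≤ σ)
    (hσL : σ ≤ Lmax) :
    0 ≤ 1 - 2 * κ * σ / (K * ((K : ℝ) - 1) * Lmax) := by
  have hK2 : (2 : ℝ) ≤ K := by exact_mod_cast hK
  have hκK : (κ : ℝ) + 1 ≤ K := by exact_mod_cast (by omega : κ + 1 ≤ K)
  rw [sub_nonneg]
  have hLmax : 0 ≤ Lmax := hσ.trans hσL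
  refine div_le_one_of_le₀ ?_ (mul_nonneg (mul_nonneg (by linarith) (by linarith)) hLmax)
  nlinarith [mul_le_mul_of_nonneg_left hσL (by linarith : (0 : ℝ) ≤ K - 1),
    mul_le_mul_of_nonneg_right hκK hσ, mul_nonneg (by linarith : (0 : ℝ) ≤ K - 2) hLmax]

theorem graph_learning_linear_convergence_general
    (K κ : ℕ) (hK : 2 ≤ K) (hκ1 : 1 ≤ κ) (hκ2 : κ ≤ K - 1)
    (h : GVec K → ℝ)
    (σ : ℝ) (hσ : 0 < σ)
    (hsc : ∀ w z : GVec K, h w + ⟪z - w, gradient h w⟫ + σ / 2 * ‖z - w‖ ^ 2 ≤ h z)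
    (L : Blk K κ → ℝ) (hLpos : ∀ b, 0 < L b)
    (hsmooth : ∀ (b : Blk K κ) (w z : GVec K), (∀ q, ¬ inBlock b q → z q = 0) →
      h (w + z) ≤ h w + ⟪z, gradient h w⟫ + L b / 2 * ‖z‖ ^ 2)
    (Lmax : ℝ) (hLmax : ∀ b, L b ≤ Lmax)
    (wstar : GVec K) (hwstar_nonneg : ∀ q, 0 ≤ wstar q)
    (w0 : GVec K) (hw0_nonneg : ∀ q, 0 ≤ w0 q)
    (T : ℕ) :
    (Fintype.card (Fin T → Blk K κ) : ℝ)⁻¹ *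
        (∑ bs : Fin T → Blk K κ, h (iterSeq h L bs w0)) - h wstar
      ≤ (1 - 2 * κ * σ / (K * ((K : ℝ) - 1) * Lmax)) ^ T * (h w0 - h wstar) := by
  have hcard : 0 < Fintype.card (Blk K κ) := by
    rw [card_blk]; exact Nat.mul_pos (by omega) (Nat.choose_pos hκ2)
  obtain ⟨b0⟩ := Fintype.card_pos_iff.mp hcard
  have hσL : σ ≤ Lmax :=
    (le_blockLipschitz_of_strongConvex hκ1 hsc b0 (hsmooth b0)).trans (hLmax b0)
  have hiter := sum_foldl_ofFn_le_pow (fun b w => blockProxUpdate h L b w) (fun w => ∀ q, 0 ≤ w q)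
    (fun b _ hw => blockProxUpdate_nonneg b hw) (fun w => h w - h wstar)
    (mul_nonneg (Nat.cast_nonneg _) (rate_nonneg hK hκ2 hσ.le hσL))
    (fun _ hw => sum_h_blockProxUpdate_sub_le hK hκ1 hσ hsc hLpos hsmooth hLmax hσL
      hwstar_nonneg hw) T hw0_nonneg
  simp only [iterSeq, sum_sub_distrib, sum_const, card_univ, Fintype.card_fun, Fintype.card_fin,
    nsmul_eq_mul, Nat.cast_pow, mul_pow] at hiter ⊢
  rw [sub_le_iff_le_add, inv_mul_le_iff₀ (by positivity)]
  linear_combination hiter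

/-- Linear convergence of decentralized graph learning (Theorem 2),
stated as a finite average over i.i.d. uniform block choices:
`(1/|B|^T) Σ_{(b_1,…,b_T)} h(w^T) − h(w*) ≤ ρ^T (h(w⁰) − h(w*))`
with `ρ = 1 − 2κσ/(K(K−1)L_max)`. -/
theorem graph_learning_linear_convergence
    (K κ : ℕ) (hK : 2 ≤ K) (hκ1 : 1 ≤ κ) (hκ2 : κ ≤ K - 1)
    (h : GVec K → ℝ) (hdiff : Differentiable ℝ h)
    (σ : ℝ) (hσ : 0 < σ)
    (hsc : ∀ w z : GVec K, h w + ⟪z - w, gradient h w⟫ + σ / 2 * ‖z - w‖ ^ 2 ≤ h z)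
    (L : Blk K κ → ℝ) (hLpos : ∀ b, 0 < L b)
    (hsmooth : ∀ (b : Blk K κ) (w z : GVec K), (∀ q, ¬ inBlock b q → z q = 0) →
      h (w + z) ≤ h w + ⟪z, gradient h w⟫ + L b / 2 * ‖z‖ ^ 2)
    (Lmax : ℝ) (hLmax : ∀ b, L b ≤ Lmax)
    (wstar : GVec K) (hwstar_nonneg : ∀ q, 0 ≤ wstar q)
    (hwstar_min : ∀ z : GVec K, (∀ q, 0 ≤ z q) → h wstar ≤ h z)
    (w0 : GVec K) (hw0_nonneg : ∀ q, 0 ≤ w0 q)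
    (T : ℕ) (hT : 1 ≤ T) :
    (Fintype.card (Fin T → Blk K κ) : ℝ)⁻¹ *
        (∑ bs : Fin T → Blk K κ, h (iterSeq h L bs w0)) - h wstar
      ≤ (1 - 2 * κ * σ / (K * ((K : ℝ) - 1) * Lmax)) ^ T * (h w0 - h wstar) :=
  graph_learning_linear_convergence_general K κ hK hκ1 hκ2 h σ hσ hsc L hLpos hsmooth Lmax hLmax
    wstar hwstar_nonneg w0 hw0_nonneg T
end

section
/- (Proximal surrogate bound, eq. (H3).) Let C ⊆ ℝ^N be a nonempty closed convex set, let h : ℝ^N → ℝ be differentiable and σ-strongly convex with σ > 0, let w* be the minimizer of h over C, and let L ≥ σ. Then for every w ∈ C, inf_{z ∈ C} [ h(w) + ⟨z − w, ∇h(w)⟩ + (L/2)·‖z − w‖₂² ] ≤ (σ/L)·h(w*) + (1 − σ/L)·h(w). -/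
/-!
Test the infimum at the point `z = w + t • (w* - w)` of `C` with `t = σ / L`. There the quadratic
term `(L / 2) t² ‖w* - w‖²` equals `t · (σ / 2) ‖w* - w‖²`, so the model value is
`h w + t · (⟪w* - w, ∇h w⟫ + (σ / 2) ‖w* - w‖²)`, and strong convexity bounds the bracket by
`h w* - h w`.
-/

open scoped RealInnerProductSpace

section QuadraticModel

variable {E : Type*} [NormedAddCommGroup E] [InnerProductSpace ℝ E]

lemma neg_sq_norm_div_le_inner_add_mul_sq_norm {L : ℝ} (hL : 0 < L) (v g : E) :
    -(‖g‖ ^ 2 / (2 * L)) ≤ ⟪v, g⟫ + L / 2 * ‖v‖ ^ 2 := by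
  have hsq : ‖L • v + g‖ ^ 2 = L ^ 2 * ‖v‖ ^ 2 + 2 * L * ⟪v, g⟫ + ‖g‖ ^ 2 := by
    rw [norm_add_sq_real, norm_smul, real_inner_smul_left, Real.norm_of_nonneg hL.le]
    ring
  have key : 0 ≤ ‖L • v + g‖ ^ 2 / (2 * L) := by positivity
  rw [hsq] at key
  have : (L ^ 2 * ‖v‖ ^ 2 + 2 * L * ⟪v, g⟫ + ‖g‖ ^ 2) / (2 * L)
      = ⟪v, g⟫ + L / 2 * ‖v‖ ^ 2 + ‖g‖ ^ 2 / (2 * L) := by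
    field_simp
    ring
  linarith

lemma bddBelow_image_quadraticModel {L : ℝ} (hL : 0 < L) (a : ℝ) (w g : E) (C : Set E) :
    BddBelow ((fun z => a + ⟪z - w, g⟫ + L / 2 * ‖z - w‖ ^ 2) '' C) := by
  refine ⟨a - ‖g‖ ^ 2 / (2 * L), ?_⟩
  rintro _ ⟨z, -, rfl⟩
  linarith [neg_sq_norm_div_le_inner_add_mul_sq_norm hL (z - w) g]

lemma quadraticModel_lineMap (a L t : ℝ) (w y g : E) :
    a + ⟪AffineMap.lineMap w y t - w, g⟫ + L / 2 * ‖AffineMap.lineMap w y t - w‖ ^ 2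
      = a + t * ⟪y - w, g⟫ + t ^ 2 * (L / 2 * ‖y - w‖ ^ 2) := by
  rw [← vsub_eq_sub (AffineMap.lineMap w y t), AffineMap.lineMap_vsub_left, vsub_eq_sub,
    real_inner_smul_left, norm_smul, mul_pow, Real.norm_eq_abs, sq_abs]
  ring

end QuadraticModel

theorem proximal_surrogate_bound_general
    (N : ℕ) (h : EuclideanSpace ℝ (Fin N) → ℝ)
    (σ L : ℝ) (hσ : 0 < σ) (hσL : σ ≤ L)
    (hsc : ∀ w z : EuclideanSpace ℝ (Fin N),
      h w + ⟪z - w, gradient h w⟫ + σ / 2 * ‖z - w‖ ^ 2 ≤ h z)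
    (C : Set (EuclideanSpace ℝ (Fin N)))
    (hCco : Convex ℝ C)
    (wstar : EuclideanSpace ℝ (Fin N)) (hws : wstar ∈ C)
    (w : EuclideanSpace ℝ (Fin N)) (hw : w ∈ C) :
    sInf ((fun z => h w + ⟪z - w, gradient h w⟫ + L / 2 * ‖z - w‖ ^ 2) '' C)
      ≤ σ / L * h wstar + (1 - σ / L) * h w := by
  have hL : 0 < L := hσ.trans_le hσL
  set t := σ / L
  have ht0 : 0 ≤ t := by positivity
  have ht1 : t ≤ 1 := (div_le_one hL).2 hσL
  have htL : t * L = σ := div_mul_cancel₀ σ hL.ne'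
  calc sInf ((fun z => h w + ⟪z - w, gradient h w⟫ + L / 2 * ‖z - w‖ ^ 2) '' C)
      ≤ h w + t * ⟪wstar - w, gradient h w⟫ + t ^ 2 * (L / 2 * ‖wstar - w‖ ^ 2) := by
        rw [← quadraticModel_lineMap]
        exact csInf_le (bddBelow_image_quadraticModel hL _ _ _ C)
          ⟨_, hCco.lineMap_mem hw hws ⟨ht0, ht1⟩, rfl⟩
    _ = h w + t * (⟪wstar - w, gradient h w⟫ + σ / 2 * ‖wstar - w‖ ^ 2) := by
        rw [← htL]; ring
    _ ≤ h w + t * (h wstar - h w) := by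
        gcongr
        linarith [hsc w wstar]
    _ = t * h wstar + (1 - t) * h w := by ring

/-- Proximal surrogate bound (eq. (H3)).
For a differentiable σ-strongly convex `h`, a nonempty closed convex `C`,
the minimizer `w*` of `h` over `C`, and `L ≥ σ`, for every `w ∈ C`:
`inf_{z ∈ C} [h(w) + ⟨z − w, ∇h(w)⟩ + (L/2)‖z − w‖²] ≤ (σ/L)h(w*) + (1 − σ/L)h(w)`. -/
theorem proximal_surrogate_bound
    (N : ℕ) (h : EuclideanSpace ℝ (Fin N) → ℝ)
    (σ L : ℝ) (hσ : 0 < σ) (hσL : σ ≤ L)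
    (hdiff : Differentiable ℝ h)
    (hsc : ∀ w z : EuclideanSpace ℝ (Fin N),
      h w + ⟪z - w, gradient h w⟫ + σ / 2 * ‖z - w‖ ^ 2 ≤ h z)
    (C : Set (EuclideanSpace ℝ (Fin N))) (hCne : C.Nonempty)
    (hCcl : IsClosed C) (hCco : Convex ℝ C)
    (wstar : EuclideanSpace ℝ (Fin N)) (hws : wstar ∈ C)
    (hmin : ∀ z ∈ C, h wstar ≤ h z)
    (w : EuclideanSpace ℝ (Fin N)) (hw : w ∈ C) :
    sInf ((fun z => h w + ⟪z - w, gradient h w⟫ + L / 2 * ‖z - w‖ ^ 2) '' C)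
      ≤ σ / L * h wstar + (1 - σ / L) * h w :=
  proximal_surrogate_bound_general N h σ L hσ hσL hsc C hCco wstar hws w hw
end

section
/- (Sub-optimality recursion bound for the Frank-Wolfe step sizes.) Let K ≥ 1 be an integer and C ≥ 0. Let p : ℕ → ℝ satisfy p(0) ≥ 0 and, for all t ≥ 0, p(t+1) ≤ (1 − γ_t/K)·p(t) + γ_t²·C/(2K), where γ_t = 2K/(t + 2K). Then for every t ≥ 0, p(t) ≤ 2K·(C + p(0))/(t + 2K). -/
/-! With `s = t + 2K` the recursion reads `p (t+1) ≤ (1 - 2/s) p t + 2KC/s²`. If `p t ≤ B/s` with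
`B = 2K(C + p 0) ≥ 2KC`, then `(1 - 2/s) B/s + 2KC/s² ≤ B/(s+1)` because, after clearing
denominators, this is `2KC (s+1) ≤ B (s+2)`. -/

theorem one_sub_two_div_mul_add_div_sq_le {s x B D : ℝ} (hs : 2 ≤ s) (hB : 0 ≤ B) (hDB : D ≤ B)
    (hx : x ≤ B / s) : (1 - 2 / s) * x + D / s ^ 2 ≤ B / (s + 1) := by
  have hs0 : 0 < s := by linarith
  have hfactor : 0 ≤ 1 - 2 / s := by
    rw [sub_nonneg, div_le_one hs0]
    exact hs
  calc (1 - 2 / s) * x + D / s ^ 2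
      ≤ (1 - 2 / s) * (B / s) + D / s ^ 2 := by gcongr
    _ = ((s - 2) * B + D) / s ^ 2 := by field_simp
    _ ≤ B / (s + 1) := by
      rw [div_le_div_iff₀ (by positivity) (by linarith)]
      nlinarith

theorem le_div_natCast_add_of_le_one_sub_two_div_mul_add {a : ℕ → ℝ} {s B D : ℝ} (hs : 2 ≤ s)
    (hB : 0 ≤ B) (hDB : D ≤ B) (h0 : a 0 ≤ B / s)
    (hrec : ∀ n : ℕ, a (n + 1) ≤ (1 - 2 / (n + s)) * a n + D / (n + s) ^ 2) (n : ℕ) :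
    a n ≤ B / (n + s) := by
  induction n with
  | zero => simpa using h0
  | succ n ih =>
    have hstep := one_sub_two_div_mul_add_div_sq_le (by linarith [n.cast_nonneg (α := ℝ)]) hB hDB ih
    rw [Nat.cast_succ, add_right_comm]
    exact (hrec n).trans hstep

/-- Sub-optimality recursion bound for the Frank-Wolfe step sizes.
If `p` satisfies `p (t+1) ≤ (1 - γ_t/K) p t + γ_t² C / (2K)` with `γ_t = 2K/(t+2K)`,
then `p t ≤ 2K(C + p 0)/(t + 2K)` for every `t`. -/
theorem frank_wolfe_suboptimality_recursion
    (K : ℕ) (hK : 1 ≤ K) (C : ℝ) (hC : 0 ≤ C)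
    (p : ℕ → ℝ) (hp0 : 0 ≤ p 0)
    (γ : ℕ → ℝ) (hγ : ∀ t : ℕ, γ t = 2 * K / ((t : ℝ) + 2 * K))
    (hrec : ∀ t : ℕ, p (t + 1) ≤ (1 - γ t / K) * p t + (γ t) ^ 2 * C / (2 * K))
    (t : ℕ) :
    p t ≤ 2 * K * (C + p 0) / ((t : ℝ) + 2 * K) := by
  have hK1 : (1 : ℝ) ≤ K := by exact_mod_cast hK
  have hrec_s (t : ℕ) : p (t + 1) ≤ (1 - 2 / (t + 2 * K)) * p t + 2 * K * C / (t + 2 * K) ^ 2 := by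
    have hrate : γ t / K = 2 / (t + 2 * K) := by rw [hγ]; field_simp
    have hquad : γ t ^ 2 * C / (2 * K) = 2 * K * C / (t + 2 * K) ^ 2 := by rw [hγ]; field_simp
    simpa only [hrate, hquad] using hrec t
  refine le_div_natCast_add_of_le_one_sub_two_div_mul_add (by linarith) (by positivity) ?_ ?_
    hrec_s t
  · nlinarith
  · rw [mul_div_cancel_left₀ _ (by positivity)]
    linarith
end
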